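/- Let n ≥ 1 and ξ₀ ∈ ℝ∖{0}. For t > 0 define u_t : ℝ^{2n} → ℂ by u_t(x) = (2πt)^{−n}·(tξ₀/sinh(tξ₀))^n·exp(−(ξ₀/(2·tanh(tξ₀)))·|x|²), where |x|² = x₁²+⋯+x_{2n}². Then each u_t is Lebesgue integrable with ∫_{ℝ^{2n}} u_t(x) dx = cosh(tξ₀)^{−n}, and for every bounded continuous function f : ℝ^{2n} → ℂ one has lim_{t→0⁺} ∫_{ℝ^{2n}} u_t(x)·f(x) dx = f(0). -/

import Mathlib

noncomputable section

open MeasureTheory Real Filter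

/-- The Mehler kernel u_t(x) = (2πt)^{−n}(tξ₀/sinh(tξ₀))^n exp(−(ξ₀/(2 tanh(tξ₀)))|x|²). -/
def mehlerK (n : ℕ) (ξ₀ : ℝ) (t : ℝ) (x : Fin (2 * n) → ℝ) : ℝ :=
  ((2 * Real.pi * t) ^ n)⁻¹ * (t * ξ₀ / Real.sinh (t * ξ₀)) ^ n *
    Real.exp (-(ξ₀ / (2 * Real.tanh (t * ξ₀))) * ∑ j, (x j) ^ 2)

lemma gauss_integrable (m : ℕ) {b : ℝ} (hb : 0 < b) :
    Integrable (fun x : Fin m → ℝ => Real.exp (-b * ∑ j, x j ^ 2)) := by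
  have key : ∀ x : Fin m → ℝ, Real.exp (-b * ∑ j, x j ^ 2) = ∏ j, Real.exp (-b * x j ^ 2) := by
    intro x; rw [Finset.mul_sum, Real.exp_sum]
  simp_rw [key]
  exact Integrable.fintype_prod (fun _ => integrable_exp_neg_mul_sq hb)

lemma gauss_integral (m : ℕ) (b : ℝ) :
    ∫ x : Fin m → ℝ, Real.exp (-b * ∑ j, x j ^ 2) = Real.sqrt (Real.pi / b) ^ m := by
  have key : ∀ x : Fin m → ℝ, Real.exp (-b * ∑ j, x j ^ 2) = ∏ j, Real.exp (-b * x j ^ 2) := by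
    intro x; rw [Finset.mul_sum, Real.exp_sum]
  simp_rw [key]
  rw [MeasureTheory.volume_pi, MeasureTheory.integral_fintype_prod_eq_pow (ι := Fin m) (fun y : ℝ => Real.exp (-b * y ^ 2)), integral_gaussian, Fintype.card_fin]

lemma sign_fact (ξ₀ : ℝ) (hξ₀ : ξ₀ ≠ 0) {t : ℝ} (ht : 0 < t) :
    0 < ξ₀ * Real.tanh (t * ξ₀) := by
  rw [Real.tanh_eq_sinh_div_cosh]
  rcases hξ₀.lt_or_gt with h | h
  · have hs : Real.sinh (t * ξ₀) < 0 := Real.sinh_neg_iff.2 (mul_neg_of_pos_of_neg ht h)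
    have : Real.sinh (t * ξ₀) / Real.cosh (t * ξ₀) < 0 :=
      div_neg_of_neg_of_pos hs (Real.cosh_pos _)
    exact mul_pos_of_neg_of_neg h this
  · exact mul_pos h (div_pos (Real.sinh_pos_iff.2 (mul_pos ht h)) (Real.cosh_pos _))

lemma part1 (n : ℕ) (ξ₀ : ℝ) (hξ₀ : ξ₀ ≠ 0) {t : ℝ} (ht : 0 < t) :
    Integrable (mehlerK n ξ₀ t) ∧
      ∫ x : Fin (2 * n) → ℝ, mehlerK n ξ₀ t x = (Real.cosh (t * ξ₀) ^ n)⁻¹ := by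
  have htanh := sign_fact ξ₀ hξ₀ ht
  have hth : Real.tanh (t * ξ₀) ≠ 0 := by
    intro h; rw [h, mul_zero] at htanh; exact lt_irrefl 0 htanh
  have hb : 0 < ξ₀ / (2 * Real.tanh (t * ξ₀)) := by
    rcases hξ₀.lt_or_gt with h | h
    · have h2 : Real.tanh (t * ξ₀) < 0 := by
        rcases hth.lt_or_gt with h' | h'
        · exact h'
        · nlinarith
      exact div_pos_iff.2 (Or.inr ⟨h, by linarith⟩)
    · have h2 : 0 < Real.tanh (t * ξ₀) := by
        rcases hth.lt_or_gt with h' | h'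
        · nlinarith
        · exact h'
      exact div_pos_iff.2 (Or.inl ⟨h, by linarith⟩)
  set b := ξ₀ / (2 * Real.tanh (t * ξ₀)) with hbdef
  set C := ((2 * Real.pi * t) ^ n)⁻¹ * (t * ξ₀ / Real.sinh (t * ξ₀)) ^ n with hCdef
  have hmeh : mehlerK n ξ₀ t = fun x => C * Real.exp (-b * ∑ j, x j ^ 2) := by
    funext x; rw [mehlerK, hbdef, hCdef]
  constructor
  · rw [hmeh]; exact (gauss_integrable (2 * n) hb).const_mul C
  · rw [hmeh, integral_const_mul, gauss_integral, pow_mul,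
      Real.sq_sqrt (le_of_lt (div_pos Real.pi_pos hb))]
    have hs : Real.sinh (t * ξ₀) ≠ 0 := Real.sinh_ne_zero.2 (mul_ne_zero ht.ne' hξ₀)
    have hc : Real.cosh (t * ξ₀) ≠ 0 := (Real.cosh_pos _).ne'
    have inner : (2 * Real.pi * t)⁻¹ * (t * ξ₀ / Real.sinh (t * ξ₀)) * (Real.pi / b)
        = (Real.cosh (t * ξ₀))⁻¹ := by
      rw [hbdef, Real.tanh_eq_sinh_div_cosh]
      have hπ : Real.pi ≠ 0 := Real.pi_ne_zero
      field_simp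
    rw [hCdef, ← inv_pow, ← mul_pow, ← mul_pow, inner, inv_pow]

lemma part2 (n : ℕ) (ξ₀ : ℝ) (hξ₀ : ξ₀ ≠ 0) (f : (Fin (2 * n) → ℝ) → ℂ)
    (hf : Continuous f) (M : ℝ) (hM : ∀ x, ‖f x‖ ≤ M) :
    Filter.Tendsto
      (fun t : ℝ => ∫ x : Fin (2 * n) → ℝ, ((mehlerK n ξ₀ t x : ℝ) : ℂ) * f x)
      (nhdsWithin 0 (Set.Ioi 0)) (nhds (f 0)) := by
  set l := nhdsWithin (0:ℝ) (Set.Ioi 0) with hl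
  set s : ℝ → ℝ := fun t => Real.sqrt (Real.tanh (t * ξ₀) / ξ₀) with hsdef
  set e : (Fin (2 * n) → ℝ) → ℝ := fun y => Real.exp (-(1/2 : ℝ) * ∑ j, y j ^ 2) with hedef
  set G : ℝ → (Fin (2 * n) → ℝ) → ℂ := fun t y => ((e y : ℝ) : ℂ) * f (s t • y) with hGdef
  have ctanh : Continuous Real.tanh := by
    have h : Real.tanh = fun x => Real.sinh x / Real.cosh x :=
      funext fun x => Real.tanh_eq_sinh_div_cosh x
    rw [h]
    exact Real.continuous_sinh.div Real.continuous_cosh fun x => (Real.cosh_pos x).ne'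
  have cs : Continuous s :=
    Real.continuous_sqrt.comp ((ctanh.comp (continuous_id.mul continuous_const)).div_const ξ₀)
  have hs0 : s 0 = 0 := by simp [hsdef]
  have he_cont : Continuous e := by
    apply Real.continuous_exp.comp
    exact continuous_const.mul (continuous_finset_sum _ fun j _ => (continuous_apply j).pow 2)
  have hM0 : 0 ≤ M := le_trans (norm_nonneg _) (hM 0)
  have heint : MeasureTheory.Integrable e := gauss_integrable (2 * n) (by norm_num : (0:ℝ) < 1/2)
  have hint_e : ∫ y : Fin (2 * n) → ℝ, e y = (2 * Real.pi) ^ n := by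
    rw [hedef]
    rw [gauss_integral (2 * n) (1/2), pow_mul,
      Real.sq_sqrt (by positivity : (0:ℝ) ≤ Real.pi / (1/2))]
    rw [show Real.pi / (1/2:ℝ) = 2 * Real.pi by ring]
  -- dominated convergence for J t = ∫ G t
  have hJ : Filter.Tendsto (fun t => ∫ y : Fin (2 * n) → ℝ, G t y) l
      (nhds (((2 * Real.pi) ^ n : ℝ) • f 0)) := by
    have hlim : Filter.Tendsto (fun t => ∫ y : Fin (2 * n) → ℝ, G t y) l
        (nhds (∫ y : Fin (2 * n) → ℝ, ((e y : ℝ) : ℂ) * f 0)) := by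
      apply MeasureTheory.tendsto_integral_filter_of_dominated_convergence
        (fun y => M * e y)
      · filter_upwards with t
        exact ((Complex.continuous_ofReal.comp he_cont).mul
          (hf.comp ((continuous_const : Continuous fun _ : Fin (2 * n) → ℝ => s t).smul continuous_id))).aestronglyMeasurable
      · filter_upwards with t
        filter_upwards with y
        rw [hGdef]
        simp only []
        rw [norm_mul, Complex.norm_real, Real.norm_eq_abs,
          abs_of_nonneg (Real.exp_pos _).le]
        calc e y * ‖f (s t • y)‖ ≤ e y * M :=
              mul_le_mul_of_nonneg_left (hM _) (Real.exp_pos _).le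
          _ = M * e y := mul_comm _ _
      · exact heint.const_mul M
      · filter_upwards with y
        have hst : Filter.Tendsto s l (nhds 0) := by
          have h := cs.tendsto 0
          rw [hs0] at h
          exact h.mono_left nhdsWithin_le_nhds
        have h1 : Filter.Tendsto (fun t => s t • y) l (nhds 0) := by
          have := hst.smul_const y
          rwa [zero_smul] at this
        exact Filter.Tendsto.mul tendsto_const_nhds
          ((hf.continuousAt.tendsto).comp h1)
    have : (∫ y : Fin (2 * n) → ℝ, ((e y : ℝ) : ℂ) * f 0)
        = ((2 * Real.pi) ^ n : ℝ) • f 0 := by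
      simp_rw [← Complex.real_smul]
      rw [integral_smul_const, hint_e]
    rwa [this] at hlim
  have hc : Filter.Tendsto
      (fun t => (Real.cosh (t * ξ₀) ^ n)⁻¹ * (((2 * Real.pi) ^ n)⁻¹ : ℝ)) l
      (nhds ((((2 * Real.pi) ^ n)⁻¹ : ℝ))) := by
    have hcont : Continuous fun t : ℝ => (Real.cosh (t * ξ₀) ^ n)⁻¹ *
        (((2 * Real.pi) ^ n)⁻¹ : ℝ) := by
      apply Continuous.mul _ continuous_const
      apply Continuous.inv₀
      · exact (Real.continuous_cosh.comp (continuous_id.mul continuous_const)).pow n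
      · intro t; exact pow_ne_zero _ (Real.cosh_pos _).ne'
    have h := hcont.tendsto 0
    rw [show ((Real.cosh (0 * ξ₀) ^ n)⁻¹ * (((2 * Real.pi) ^ n)⁻¹ : ℝ))
        = (((2 * Real.pi) ^ n)⁻¹ : ℝ) by simp] at h
    exact h.mono_left nhdsWithin_le_nhds
  have hfinal : Filter.Tendsto
      (fun t => ((Real.cosh (t * ξ₀) ^ n)⁻¹ * (((2 * Real.pi) ^ n)⁻¹ : ℝ)) •
        ∫ y : Fin (2 * n) → ℝ, G t y) l (nhds (f 0)) := by
    have h2π : ((2 * Real.pi) ^ n : ℝ) ≠ 0 := pow_ne_zero _ (by positivity)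
    have := hc.smul hJ
    rw [smul_smul, inv_mul_cancel₀ h2π, one_smul] at this
    exact this
  apply hfinal.congr'
  rw [Filter.eventuallyEq_iff_exists_mem]
  refine ⟨Set.Ioi 0, self_mem_nhdsWithin, fun t ht => ?_⟩
  -- the substitution identity for t > 0
  have ht : (0:ℝ) < t := ht
  have htanh := sign_fact ξ₀ hξ₀ ht
  have hth : Real.tanh (t * ξ₀) ≠ 0 := by
    intro h; rw [h, mul_zero] at htanh; exact lt_irrefl 0 htanh
  have hstpos : 0 < Real.tanh (t * ξ₀) / ξ₀ := by
    have h : Real.tanh (t * ξ₀) / ξ₀ = (ξ₀ * Real.tanh (t * ξ₀)) / ξ₀ ^ 2 := by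
      field_simp
    rw [h]; positivity
  have hspos : 0 < s t := Real.sqrt_pos.2 hstpos
  have hs2 : s t ^ 2 = Real.tanh (t * ξ₀) / ξ₀ := Real.sq_sqrt hstpos.le
  set b := ξ₀ / (2 * Real.tanh (t * ξ₀)) with hbdef
  set C := ((2 * Real.pi * t) ^ n)⁻¹ * (t * ξ₀ / Real.sinh (t * ξ₀)) ^ n with hCdef
  have hbs : b * s t ^ 2 = 1/2 := by
    have hth' : Real.tanh (ξ₀ * t) ≠ 0 := by rwa [mul_comm]
    rw [hs2, hbdef]; field_simp
  set F : (Fin (2 * n) → ℝ) → ℂ := fun x => ((mehlerK n ξ₀ t x : ℝ) : ℂ) * f x with hFdef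
  have hrank : Module.finrank ℝ (Fin (2 * n) → ℝ) = 2 * n := by
    rw [Module.finrank_fintype_fun_eq_card, Fintype.card_fin]
  have key := MeasureTheory.Measure.integral_comp_smul
    (MeasureTheory.volume : MeasureTheory.Measure (Fin (2 * n) → ℝ)) F (s t)
  rw [hrank, abs_of_nonneg (by positivity : (0:ℝ) ≤ ((s t ^ (2*n))⁻¹))] at key
  have key2 : ∫ x : Fin (2 * n) → ℝ, F x
      = (s t ^ (2 * n)) • ∫ x : Fin (2 * n) → ℝ, F (s t • x) := by
    rw [key, smul_smul, mul_inv_cancel₀ (by positivity : (s t ^ (2*n)) ≠ 0), one_smul]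
  have hFs : ∀ x : Fin (2 * n) → ℝ, F (s t • x) = (C : ℂ) * G t x := by
    intro x
    rw [hFdef]
    simp only [mehlerK, hGdef]
    rw [← hbdef, ← hCdef]
    have hsum : -b * ∑ j, (s t • x) j ^ 2 = -(1/2 : ℝ) * ∑ j, x j ^ 2 := by
      simp only [Pi.smul_apply, smul_eq_mul, mul_pow]
      rw [← Finset.mul_sum]
      rw [← mul_assoc]
      rw [show -b * s t ^ 2 = -(1/2:ℝ) by rw [neg_mul, hbs]]
    rw [hsum, Complex.ofReal_mul, mul_assoc]
  have key3 : ∫ x : Fin (2 * n) → ℝ, F (s t • x)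
      = C • ∫ y : Fin (2 * n) → ℝ, G t y := by
    simp_rw [hFs, ← Complex.real_smul]
    rw [MeasureTheory.integral_smul]
  have hcoef : s t ^ (2 * n) * C
      = (Real.cosh (t * ξ₀) ^ n)⁻¹ * (((2 * Real.pi) ^ n)⁻¹ : ℝ) := by
    have hs' : Real.sinh (t * ξ₀) ≠ 0 := Real.sinh_ne_zero.2 (mul_ne_zero ht.ne' hξ₀)
    have hc' : Real.cosh (t * ξ₀) ≠ 0 := (Real.cosh_pos _).ne'
    rw [pow_mul, hs2, hCdef]
    rw [← inv_pow, ← mul_pow, ← mul_pow, ← inv_pow, ← inv_pow, ← mul_pow]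
    congr 1
    rw [Real.tanh_eq_sinh_div_cosh]
    have hπ : Real.pi ≠ 0 := Real.pi_ne_zero
    field_simp
  have hident : ∫ x : Fin (2 * n) → ℝ, ((mehlerK n ξ₀ t x : ℝ) : ℂ) * f x
      = ((Real.cosh (t * ξ₀) ^ n)⁻¹ * (((2 * Real.pi) ^ n)⁻¹ : ℝ)) •
        ∫ y : Fin (2 * n) → ℝ, G t y := by
    calc ∫ x : Fin (2 * n) → ℝ, ((mehlerK n ξ₀ t x : ℝ) : ℂ) * f x
        = (s t ^ (2 * n)) • (C • ∫ y : Fin (2 * n) → ℝ, G t y) := by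
          rw [← key3, ← key2]
      _ = ((Real.cosh (t * ξ₀) ^ n)⁻¹ * (((2 * Real.pi) ^ n)⁻¹ : ℝ)) •
          ∫ y : Fin (2 * n) → ℝ, G t y := by rw [smul_smul, hcoef]
  exact hident.symm

/-- Each u_t is integrable with ∫ u_t = cosh(tξ₀)^{−n}, and for every bounded
continuous f one has ∫ u_t f → f(0) as t → 0⁺. -/
theorem stmt15 (n : ℕ) (hn : 1 ≤ n) (ξ₀ : ℝ) (hξ₀ : ξ₀ ≠ 0) :
    (∀ t : ℝ, 0 < t →
      MeasureTheory.Integrable (mehlerK n ξ₀ t) ∧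
      ∫ x : Fin (2 * n) → ℝ, mehlerK n ξ₀ t x = (Real.cosh (t * ξ₀) ^ n)⁻¹) ∧
    ∀ f : (Fin (2 * n) → ℝ) → ℂ, Continuous f → (∃ M : ℝ, ∀ x, ‖f x‖ ≤ M) →
      Filter.Tendsto
        (fun t : ℝ => ∫ x : Fin (2 * n) → ℝ, ((mehlerK n ξ₀ t x : ℝ) : ℂ) * f x)
        (nhdsWithin 0 (Set.Ioi 0)) (nhds (f 0)) := by
  exact ⟨fun t ht => part1 n ξ₀ hξ₀ ht,
    fun f hf ⟨M, hM⟩ => part2 n ξ₀ hξ₀ f hf M hM⟩
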